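/- arXiv:2405.07274 — 4 statements merged into one kernel-verified Lean document; each statement's English description precedes it below -/
import Mathlib

section
/- Let Z ~ Geom(μ) with μ ∈ (0,1), μ̄ = 1-μ, and let z* be a positive integer. Define Ŝ = Z if Z ≤ z* and Ŝ = z*+1 otherwise. Then E[Ŝ²] = (2μ̄ - μ̄^{z*+1}(2 + z*μ))/μ² + (1 - μ̄^{z*} z* - μ̄^{z*})/μ + μ̄^{z*} z* + μ̄^{z*}. -/
lemma key_finite_sum (μ : ℝ) (hμ0 : 0 < μ) (hμ1 : μ < 1) :
    ∀ z : ℕ, (∑ i ∈ Finset.range (z + 1), (i : ℝ) ^ 2 * (μ * (1 - μ) ^ (i - 1)))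
        + ((z : ℝ) + 1) ^ 2 * ((1 - μ) ^ z)
      = (2 * (1 - μ) - (1 - μ) ^ (z + 1) * (2 + (z : ℝ) * μ)) / μ ^ 2
        + (1 - (1 - μ) ^ z * (z : ℝ) - (1 - μ) ^ z) / μ
        + (1 - μ) ^ z * (z : ℝ) + (1 - μ) ^ z := by
  have hμ : μ ≠ 0 := ne_of_gt hμ0
  intro z
  induction z with
  | zero =>
    rw [Finset.sum_range_one]
    push_cast
    field_simp
    ring
  | succ n ih =>
    have h1 : (∑ i ∈ Finset.range (n + 1), (i : ℝ) ^ 2 * (μ * (1 - μ) ^ (i - 1)))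
        = (2 * (1 - μ) - (1 - μ) ^ (n + 1) * (2 + (n : ℝ) * μ)) / μ ^ 2
          + (1 - (1 - μ) ^ n * (n : ℝ) - (1 - μ) ^ n) / μ
          + (1 - μ) ^ n * (n : ℝ) + (1 - μ) ^ n - ((n : ℝ) + 1) ^ 2 * (1 - μ) ^ n := by
      linarith [ih]
    rw [Finset.sum_range_succ, h1]
    simp only [Nat.add_sub_cancel]
    push_cast
    field_simp
    ring

/-- For Z ~ Geom(μ), Ŝ = Z if Z ≤ z*, else z*+1; then
    E[Ŝ²] = (2μ̄ - μ̄^{z*+1}(2 + z*μ))/μ² + (1 - μ̄^{z*} z* - μ̄^{z*})/μ + μ̄^{z*} z* + μ̄^{z*}. -/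
theorem effective_service_second_moment (μ : ℝ) (hμ0 : 0 < μ) (hμ1 : μ < 1)
    (p : ℕ → ℝ) (hp0 : p 0 = 0)
    (hp : ∀ k : ℕ, 1 ≤ k → p k = μ * (1 - μ) ^ (k - 1)) (z : ℕ) (hz : 1 ≤ z) :
    (∑' k : ℕ, (if k ≤ z then (k : ℝ) else (z : ℝ) + 1) ^ 2 * p k)
      = (2 * (1 - μ) - (1 - μ) ^ (z + 1) * (2 + (z : ℝ) * μ)) / μ ^ 2
        + (1 - (1 - μ) ^ z * (z : ℝ) - (1 - μ) ^ z) / μ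
        + (1 - μ) ^ z * (z : ℝ) + (1 - μ) ^ z := by
  have hμ : μ ≠ 0 := ne_of_gt hμ0
  have hq0 : (0 : ℝ) < 1 - μ := by linarith
  have hq1 : (1 : ℝ) - μ < 1 := by linarith
  have hgeo : Summable (fun k : ℕ => (1 - μ) ^ k) := summable_geometric_of_lt_one hq0.le hq1
  have hbd : ∀ k : ℕ, (if k ≤ z then (k : ℝ) else (z : ℝ) + 1) ^ 2 ≤ ((z : ℝ) + 1) ^ 2 := by
    intro k
    split
    · next h =>
      have hk : (k : ℝ) ≤ (z : ℝ) := by exact_mod_cast h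
      nlinarith [Nat.cast_nonneg (α := ℝ) k]
    · exact le_refl _
  have hf : Summable (fun k : ℕ => (if k ≤ z then (k : ℝ) else (z : ℝ) + 1) ^ 2 * p k) := by
    apply Summable.of_nonneg_of_le
      (f := fun k : ℕ => (((z : ℝ) + 1) ^ 2 * (μ / (1 - μ))) * (1 - μ) ^ k)
    · intro k
      rcases Nat.eq_zero_or_pos k with h | h
      · simp [h, hp0]
      · rw [hp k h]
        positivity
    · intro k
      rcases Nat.eq_zero_or_pos k with h | h
      · simp only [h, hp0, mul_zero]
        positivity
      · have hpk : p k = (μ / (1 - μ)) * (1 - μ) ^ k := by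
          rw [hp k h, div_mul_eq_mul_div, eq_div_iff (ne_of_gt hq0), mul_assoc, ← pow_succ,
            Nat.sub_add_cancel h]
        rw [hpk, show (((z : ℝ) + 1) ^ 2 * (μ / (1 - μ))) * (1 - μ) ^ k
            = ((z : ℝ) + 1) ^ 2 * ((μ / (1 - μ)) * (1 - μ) ^ k) by ring]
        apply mul_le_mul_of_nonneg_right (hbd k)
        positivity
    · exact hgeo.mul_left _
  rw [← Summable.sum_add_tsum_nat_add (z + 1) hf]
  have htail : ∀ k : ℕ,
      (if k + (z + 1) ≤ z then ((k + (z + 1) : ℕ) : ℝ) else (z : ℝ) + 1) ^ 2 * p (k + (z + 1))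
        = (((z : ℝ) + 1) ^ 2 * μ * (1 - μ) ^ z) * (1 - μ) ^ k := by
    intro k
    rw [if_neg (by omega), hp _ (by omega)]
    have h1 : k + (z + 1) - 1 = k + z := by omega
    rw [h1, pow_add]
    ring
  have htailsum : (∑' k : ℕ,
      (if k + (z + 1) ≤ z then ((k + (z + 1) : ℕ) : ℝ) else (z : ℝ) + 1) ^ 2 * p (k + (z + 1)))
        = ((z : ℝ) + 1) ^ 2 * (1 - μ) ^ z := by
    rw [tsum_congr htail, tsum_mul_left, tsum_geometric_of_lt_one hq0.le hq1]
    have h1q : (1 : ℝ) - (1 - μ) = μ := by ring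
    rw [h1q]
    field_simp
  have hfin : (∑ i ∈ Finset.range (z + 1), (if i ≤ z then (i : ℝ) else (z : ℝ) + 1) ^ 2 * p i)
      = ∑ i ∈ Finset.range (z + 1), (i : ℝ) ^ 2 * (μ * (1 - μ) ^ (i - 1)) := by
    apply Finset.sum_congr rfl
    intro i hi
    rw [Finset.mem_range] at hi
    have hiz : i ≤ z := by omega
    rw [if_pos hiz]
    rcases Nat.eq_zero_or_pos i with h | h
    · simp [h, hp0]
    · rw [hp i h]
  push_cast at htailsum ⊢
  rw [htailsum, hfin]
  exact key_finite_sum μ hμ0 hμ1 z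
end

section
/- Let V_{β,n} : ℕ_{>0} × ℕ → ℝ be defined recursively by V_{β,0}(a,z) = 0 and V_{β,n}(a,z) = a + 1/2 + min(λ + β V_{β,n-1}(1,0), βμ V_{β,n-1}(z+1,0) + β(1-μ) V_{β,n-1}(a+1,z+1)), where β ∈ (0,1), μ ∈ (0,1), λ > 0. Then for every n ≥ 0 and every fixed z, the map a ↦ V_{β,n}(a,z) is monotonically non-decreasing. -/
/-! Value iteration preserves monotonicity in the age: the stage cost `a + 1/2` is increasing in `a`,
the offloading branch does not depend on `a`, and the only other occurrence of `a` is the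
continuation `V (a + 1) (z + 1)`, weighted by `β (1 - μ) ≥ 0`, which is monotone in `a` by
induction on `n`. -/

theorem bellman_update_monotone {β μ lam : ℝ} (hβμ : 0 ≤ β * (1 - μ)) {W : ℕ → ℕ → ℝ}
    (hW : ∀ z, Monotone fun a => W a z) (z : ℕ) :
    Monotone fun a : ℕ => (a : ℝ) + 1 / 2
      + min (lam + β * W 1 0) (β * μ * W (z + 1) 0 + β * (1 - μ) * W (a + 1) (z + 1)) := by
  intro a a' h
  have hcont : W (a + 1) (z + 1) ≤ W (a' + 1) (z + 1) := hW (z + 1) (Nat.succ_le_succ h)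
  dsimp only
  gcongr

theorem value_iter_monotone_age_general (β μ lam : ℝ)
    (hβ : β ∈ Set.Ioo (0 : ℝ) 1) (hμ : μ ∈ Set.Ioo (0 : ℝ) 1)
    (V : ℕ → ℕ → ℕ → ℝ)
    (hV0 : ∀ a z, V 0 a z = 0)
    (hV : ∀ n a z, V (n + 1) a z
      = (a : ℝ) + 1 / 2
        + min (lam + β * V n 1 0)
            (β * μ * V n (z + 1) 0 + β * (1 - μ) * V n (a + 1) (z + 1))) :
    ∀ n z a a', 1 ≤ a → a ≤ a' → V n a z ≤ V n a' z := by
  have hβμ : 0 ≤ β * (1 - μ) := mul_nonneg hβ.1.le (sub_nonneg.2 hμ.2.le)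
  have hmono : ∀ n z, Monotone fun a => V n a z := by
    intro n
    induction n with
    | zero => intro z a a' _; simp only [hV0, le_refl]
    | succ n ih => intro z; simpa only [hV] using bellman_update_monotone hβμ ih z
  intro n z a a' _ h
  exact hmono n z h

/-- The value-iteration functions V_{β,n} are monotone
    non-decreasing in the age coordinate a (for each fixed z). -/
theorem value_iter_monotone_age (β μ lam : ℝ)
    (hβ : β ∈ Set.Ioo (0 : ℝ) 1) (hμ : μ ∈ Set.Ioo (0 : ℝ) 1) (hlam : 0 < lam)
    (V : ℕ → ℕ → ℕ → ℝ)
    (hV0 : ∀ a z, V 0 a z = 0)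
    (hV : ∀ n a z, V (n + 1) a z
      = (a : ℝ) + 1 / 2
        + min (lam + β * V n 1 0)
            (β * μ * V n (z + 1) 0 + β * (1 - μ) * V n (a + 1) (z + 1))) :
    ∀ n z a a', 1 ≤ a → a ≤ a' → V n a z ≤ V n a' z :=
  value_iter_monotone_age_general β μ lam hβ hμ V hV0 hV
end

section
/- Let V_{β,n} be the value iteration defined by V_{β,0}(a,z) = 0 and V_{β,n}(a,z) = a + 1/2 + min(λ + β V_{β,n-1}(1,0), βμ V_{β,n-1}(z+1,0) + β(1-μ) V_{β,n-1}(a+1,z+1)) with β ∈ (0,1), μ ∈ (0,1), λ > 0. Then for every n ≥ 0 and every fixed a, the map z ↦ V_{β,n}(a,z) is monotonically non-decreasing. -/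
/-- The value-iteration functions V_{β,n} are monotone
    non-decreasing in the time-in-service coordinate z (for each fixed a). -/
theorem value_iter_monotone_service (β μ lam : ℝ)
    (hβ : β ∈ Set.Ioo (0 : ℝ) 1) (hμ : μ ∈ Set.Ioo (0 : ℝ) 1) (hlam : 0 < lam)
    (V : ℕ → ℕ → ℕ → ℝ)
    (hV0 : ∀ a z, V 0 a z = 0)
    (hV : ∀ n a z, V (n + 1) a z
      = (a : ℝ) + 1 / 2
        + min (lam + β * V n 1 0)
            (β * μ * V n (z + 1) 0 + β * (1 - μ) * V n (a + 1) (z + 1))) :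
    ∀ n a z z', 1 ≤ a → z ≤ z' → V n a z ≤ V n a z' := by
  have key : ∀ n a a' z z', a ≤ a' → z ≤ z' → V n a z ≤ V n a' z' := by
    intro n
    induction n with
    | zero => intro a a' z z' _ _; simp [hV0]
    | succ n ih =>
      intro a a' z z' ha hz
      rw [hV, hV]
      have h1 : (a : ℝ) ≤ (a' : ℝ) := by exact_mod_cast ha
      have h2 : min (lam + β * V n 1 0)
          (β * μ * V n (z + 1) 0 + β * (1 - μ) * V n (a + 1) (z + 1))
          ≤ min (lam + β * V n 1 0)
          (β * μ * V n (z' + 1) 0 + β * (1 - μ) * V n (a' + 1) (z' + 1)) := by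
        apply min_le_min le_rfl
        have hβμ : 0 ≤ β * μ := le_of_lt (mul_pos hβ.1 hμ.1)
        have hβμ' : 0 ≤ β * (1 - μ) := le_of_lt (mul_pos hβ.1 (by linarith [hμ.2]))
        have := ih (z + 1) (z' + 1) 0 0 (by omega) le_rfl
        have := ih (a + 1) (a' + 1) (z + 1) (z' + 1) (by omega) (by omega)
        nlinarith [ih (z + 1) (z' + 1) 0 0 (by omega) le_rfl,
          ih (a + 1) (a' + 1) (z + 1) (z' + 1) (by omega) (by omega)]
      linarith
  intro n a z z' _ hz
  exact key n a a z z' le_rfl hz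
end

section
/- Let V_β : ℕ_{>0} × ℕ → ℝ be monotone non-decreasing in each coordinate. Suppose that in state (a,z) the offload action is optimal: βμ V_β(z+1,0) + β(1-μ) V_β(a+1,z+1) ≥ λ + β V_β(1,0). Then offloading is also optimal in state (a,z+1): βμ V_β(z+2,0) + β(1-μ) V_β(a+1,z+2) ≥ λ + β V_β(1,0). -/
/-- If V_β is monotone in each coordinate and offloading is
    optimal in state (a,z), then offloading is optimal in state (a,z+1). -/
theorem offload_upward_closed_in_service (β μ lam : ℝ)
    (hβ : β ∈ Set.Ioo (0 : ℝ) 1) (hμ : μ ∈ Set.Ioo (0 : ℝ) 1) (hlam : 0 < lam)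
    (V : ℕ → ℕ → ℝ)
    (hmono_a : ∀ z a a', 1 ≤ a → a ≤ a' → V a z ≤ V a' z)
    (hmono_z : ∀ a z z', 1 ≤ a → z ≤ z' → V a z ≤ V a z')
    (a z : ℕ) (ha : 1 ≤ a)
    (hopt : β * μ * V (z + 1) 0 + β * (1 - μ) * V (a + 1) (z + 1)
      ≥ lam + β * V 1 0) :
    β * μ * V (z + 2) 0 + β * (1 - μ) * V (a + 1) (z + 2)
      ≥ lam + β * V 1 0 := by
  have h1 : V (z + 1) 0 ≤ V (z + 2) 0 := hmono_a 0 (z+1) (z+2) (by omega) (by omega)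
  have h2 : V (a + 1) (z + 1) ≤ V (a + 1) (z + 2) := hmono_z (a+1) (z+1) (z+2) (by omega) (by omega)
  have hβ0 := hβ.1
  have hμ1 : (0:ℝ) ≤ 1 - μ := by linarith [hμ.2]
  nlinarith [mul_le_mul_of_nonneg_left h1 (le_of_lt (mul_pos hβ0 hμ.1)),
    mul_le_mul_of_nonneg_left h2 (mul_nonneg hβ0.le hμ1)]
end
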